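/- The 6×6 real matrix M = [[−5,0,0,0,0,5],[0,−3,0,0,3,0],[0,0,−1,1,0,0],[0,0,−1,1,0,0],[0,−3,0,0,3,0],[−5,0,0,0,0,5]] satisfies M² = 0 and rank(M) = 3; hence its only eigenvalue is 0 with geometric multiplicity 3 and Jordan type 2+2+2. -/

import Mathlib

/-!
Since `M² = 0`, the range of `M` lies in its kernel, so rank–nullity gives `2 · rank M ≤ 6`;
the leading `3 × 3` minor is `diag(-5, -3, -1)`, so `rank M ≥ 3`. Hence `rank M = 3` and the
kernel has dimension `6 - 3 = 3`. Every eigenvalue of a nilpotent matrix is nilpotent, hence `0`.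
-/

open Matrix

noncomputable def M15 : Matrix (Fin 6) (Fin 6) ℝ :=
  !![-5, 0, 0, 0, 0, 5;
     0, -3, 0, 0, 3, 0;
     0, 0, -1, 1, 0, 0;
     0, 0, -1, 1, 0, 0;
     0, -3, 0, 0, 3, 0;
     -5, 0, 0, 0, 0, 5]

namespace Matrix

variable {n K : Type*} [Fintype n]

theorem rank_add_finrank_ker_mulVecLin [Field K] (A : Matrix n n K) :
    A.rank + Module.finrank K (LinearMap.ker A.mulVecLin) = Fintype.card n := by
  rw [rank, LinearMap.finrank_range_add_finrank_ker, Module.finrank_fintype_fun_eq_card]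

variable [DecidableEq n]

theorem two_mul_rank_le_card_of_sq_eq_zero [Field K] {A : Matrix n n K} (hA : A ^ 2 = 0) :
    2 * A.rank ≤ Fintype.card n := by
  rw [two_mul]
  exact rank_add_rank_le_card_of_mul_eq_zero (by rwa [← sq])

theorem eq_zero_of_hasEigenvalue_of_isNilpotent [CommRing K] [IsDomain K] {A : Matrix n n K}
    (hA : IsNilpotent A) {μ : K} (hμ : Module.End.HasEigenvalue A.mulVecLin μ) : μ = 0 := by
  have hf : IsNilpotent A.mulVecLin := by rwa [← toLin'_apply', isNilpotent_toLin'_iff]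
  exact (hμ.isNilpotent_of_isNilpotent hf).eq_zero

end Matrix

theorem M15_sq : M15 ^ 2 = 0 := by
  rw [sq]
  ext i j
  fin_cases i <;> fin_cases j <;> simp [M15, mul_apply, Fin.sum_univ_six]

theorem M15_submatrix_castLE :
    M15.submatrix (Fin.castLE (by norm_num : 3 ≤ 6)) (Fin.castLE (by norm_num : 3 ≤ 6)) =
      diagonal ![-5, -3, -1] := by
  ext i j
  fin_cases i <;> fin_cases j <;> simp [M15]

theorem three_le_rank_M15 : 3 ≤ M15.rank := by
  classical
  calc 3 = (diagonal ![(-5 : ℝ), -3, -1]).rank := by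
        rw [rank_diagonal, Fintype.card_subtype,
          Finset.filter_true_of_mem (by intro i _; fin_cases i <;> norm_num)]
        rfl
    _ ≤ M15.rank := M15_submatrix_castLE ▸ rank_submatrix_le _ _ _

theorem rank_M15 : M15.rank = 3 := by
  have hle := two_mul_rank_le_card_of_sq_eq_zero M15_sq
  rw [Fintype.card_fin] at hle
  have := three_le_rank_M15
  omega

theorem stmt_15 :
    M15 ^ 2 = 0 ∧ M15.rank = 3 ∧
    (∀ μ : ℝ, Module.End.HasEigenvalue M15.mulVecLin μ → μ = 0) ∧
    Module.finrank ℝ ↥(LinearMap.ker M15.mulVecLin) = 3 := by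
  refine ⟨M15_sq, rank_M15, fun μ ↦ eq_zero_of_hasEigenvalue_of_isNilpotent ⟨2, M15_sq⟩, ?_⟩
  have := rank_add_finrank_ker_mulVecLin M15
  rw [rank_M15, Fintype.card_fin] at this
  omega
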